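/- Let k₁ < k₂. For all vertices u, v of the Levenshtein graph L_{k₁,k₂;a}, the geodesic distance d(u,v) equals the Levenshtein distance ℓ(u,v). -/

import Mathlib

/-- Costs for the Levenshtein distance (copied from the older Mathlib, where it has since been removed). -/
structure Levenshtein.Cost (α β δ : Type*) where
  delete : α → δ
  insert : β → δ
  substitute : α → β → δ

/-- The default cost: insertions, deletions and substitutions of distinct letters cost 1. -/
def Levenshtein.defaultCost {α : Type*} [DecidableEq α] : Levenshtein.Cost α α ℕ where
  delete _ := 1
  insert _ := 1
  substitute a b := if a = b then 0 else 1

/-- Auxiliary step of the Levenshtein dynamic programme (older Mathlib). -/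
def Levenshtein.impl {α β δ : Type*} [AddZeroClass δ] [Min δ] (C : Levenshtein.Cost α β δ)
    (xs : List α) (y : β) (d : {r : List δ // 0 < r.length}) : {r : List δ // 0 < r.length} :=
  let ⟨ds, w⟩ := d
  xs.zip (ds.zip ds.tail) |>.foldr
    (init := ⟨[C.insert y + ds.getLast (List.length_pos_iff.mp w)], by simp⟩)
    (fun ⟨x, d₀, d₁⟩ ⟨r, w⟩ =>
      ⟨min (C.delete x + r[0]) (min (C.insert y + d₀) (C.substitute x y + d₁)) :: r, by simp⟩)

/-- Levenshtein distances between all suffixes (older Mathlib). -/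
def suffixLevenshtein {α β δ : Type*} [AddZeroClass δ] [Min δ] (C : Levenshtein.Cost α β δ)
    (xs : List α) (ys : List β) : {r : List δ // 0 < r.length} :=
  ys.foldr
    (Levenshtein.impl C xs)
    (xs.foldr (init := ⟨[0], by simp⟩) (fun a ⟨r, w⟩ => ⟨(C.delete a + r[0]) :: r, by simp⟩))

/-- The Levenshtein distance with cost `C` (older Mathlib). -/
def levenshtein {α β δ : Type*} [AddZeroClass δ] [Min δ] (C : Levenshtein.Cost α β δ)
    (xs : List α) (ys : List β) : δ :=
  let ⟨r, w⟩ := suffixLevenshtein C xs ys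
  r[0]

/-- Vertices of the Levenshtein graph: strings over `Fin a` of length between `k₁` and `k₂`. -/
def LevVertex (a k₁ k₂ : ℕ) := {w : List (Fin a) // k₁ ≤ w.length ∧ w.length ≤ k₂}

/-- The Levenshtein graph `L_{k₁,k₂;a}`: two strings are adjacent iff their edit distance is 1. -/
def levGraph (a k₁ k₂ : ℕ) : SimpleGraph (LevVertex a k₁ k₂) :=
  SimpleGraph.fromRel (fun u v => levenshtein Levenshtein.defaultCost u.1 v.1 = 1)

/-! The unit-cost edit distance `ℓ` is a metric on strings; the triangle inequality follows by
induction on the three strings through the recursion for `ℓ`. Since adjacent vertices are at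
`ℓ`-distance `1`, every walk from `u` to `v` has length at least `ℓ(u, v)`. Conversely, for
`x ≠ y` there is a string `w` with `ℓ(x, w) = 1` and `ℓ(w, y) = ℓ(x, y) - 1`; it can be chosen
no longer than `x` when `|y| ≤ |x|`, and no shorter than `x` when `|x| ≤ |y|`. As `k₁ < k₂`, one
of the two choices keeps `w` within the lengths `[k₁, k₂]`, and induction on `ℓ` yields a walk
of length `ℓ(u, v)`. -/

section Recursion

variable {α β δ : Type*} [AddZeroClass δ] [Min δ] (C : Levenshtein.Cost α β δ)

theorem Levenshtein.impl_nil_val (y : β) (d : {r : List δ // 0 < r.length}) {c : δ}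
    (h : d.1 = [c]) : (Levenshtein.impl C [] y d).1 = [C.insert y + c] := by
  obtain ⟨d, _⟩ := d
  subst h
  rfl

theorem Levenshtein.impl_cons_val (x : α) (xs : List α) (y : β)
    (d e : {r : List δ // 0 < r.length}) {c : δ} (h : d.1 = c :: e.1) :
    (Levenshtein.impl C (x :: xs) y d).1 =
      min (C.delete x + (Levenshtein.impl C xs y e).1[0]'(Levenshtein.impl C xs y e).2)
        (min (C.insert y + c) (C.substitute x y + e.1[0]'e.2)) ::
        (Levenshtein.impl C xs y e).1 := by
  obtain ⟨d, _⟩ := d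
  obtain ⟨_ | ⟨e₀, e⟩, he⟩ := e
  · simp at he
  · subst h
    rfl

theorem levenshtein_eq_getElem_zero (xs : List α) (ys : List β) :
    levenshtein C xs ys = (suffixLevenshtein C xs ys).1[0]'(suffixLevenshtein C xs ys).2 := rfl

theorem suffixLevenshtein_nil_left_val (ys : List β) :
    (suffixLevenshtein C [] ys).1 = [levenshtein C [] ys] := by
  cases ys <;> rfl

theorem suffixLevenshtein_cons_left_val (x : α) (xs : List α) :
    ∀ ys : List β, (suffixLevenshtein C (x :: xs) ys).1 =
      levenshtein C (x :: xs) ys :: (suffixLevenshtein C xs ys).1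
  | [] => rfl
  | y :: ys => by
    have h : (suffixLevenshtein C (x :: xs) (y :: ys)).1 = _ :=
      Levenshtein.impl_cons_val C x xs y _ _ (suffixLevenshtein_cons_left_val x xs ys)
    simp only [levenshtein_eq_getElem_zero, h, List.getElem_cons_zero]
    rfl

@[simp] theorem levenshtein_nil_cons (y : β) (ys : List β) :
    levenshtein C [] (y :: ys) = C.insert y + levenshtein C [] ys := by
  have h : (suffixLevenshtein C [] (y :: ys)).1 = _ :=
    Levenshtein.impl_nil_val C y _ (suffixLevenshtein_nil_left_val C ys)
  simp only [levenshtein_eq_getElem_zero, h, List.getElem_cons_zero]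

@[simp] theorem levenshtein_cons_nil (x : α) (xs : List α) :
    levenshtein C (x :: xs) [] = C.delete x + levenshtein C xs [] := rfl

@[simp] theorem levenshtein_cons_cons (x : α) (xs : List α) (y : β) (ys : List β) :
    levenshtein C (x :: xs) (y :: ys) =
      min (C.delete x + levenshtein C xs (y :: ys))
        (min (C.insert y + levenshtein C (x :: xs) ys)
          (C.substitute x y + levenshtein C xs ys)) := by
  have h : (suffixLevenshtein C (x :: xs) (y :: ys)).1 = _ :=
    Levenshtein.impl_cons_val C x xs y _ _ (suffixLevenshtein_cons_left_val C x xs ys)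
  simp only [levenshtein_eq_getElem_zero, h, List.getElem_cons_zero]
  rfl

end Recursion

section EditDistance

open Levenshtein

variable {α : Type*} [DecidableEq α]

def editDist (x y : List α) : ℕ := levenshtein defaultCost x y

theorem Levenshtein.defaultCost_substitute_le_one (a b : α) : defaultCost.substitute a b ≤ 1 := by
  change ite _ _ _ ≤ 1
  split <;> omega

theorem Levenshtein.defaultCost_substitute_self (a : α) : defaultCost.substitute a a = 0 :=
  if_pos rfl

theorem Levenshtein.defaultCost_substitute_of_ne {a b : α} (h : a ≠ b) :
    defaultCost.substitute a b = 1 :=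
  if_neg h

theorem Levenshtein.defaultCost_substitute_comm (a b : α) :
    defaultCost.substitute a b = defaultCost.substitute b a := by
  change ite _ _ _ = ite _ _ _
  simp only [eq_comm]

theorem Levenshtein.defaultCost_substitute_triangle (a b c : α) :
    defaultCost.substitute a c ≤ defaultCost.substitute a b + defaultCost.substitute b c := by
  by_cases hab : a = b
  · subst hab
    rw [defaultCost_substitute_self, Nat.zero_add]
  · rw [defaultCost_substitute_of_ne hab]
    have := defaultCost_substitute_le_one a c
    omega

@[simp] theorem editDist_nil_left (y : List α) : editDist [] y = y.length := by
  induction y with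
  | nil => rfl
  | cons b y ih =>
    simp only [editDist, levenshtein_nil_cons] at ih ⊢
    rw [ih, List.length_cons, Nat.add_comm]
    rfl

@[simp] theorem editDist_nil_right (x : List α) : editDist x [] = x.length := by
  induction x with
  | nil => rfl
  | cons a x ih =>
    simp only [editDist, levenshtein_cons_nil] at ih ⊢
    rw [ih, List.length_cons, Nat.add_comm]
    rfl

theorem editDist_cons_cons (a b : α) (x y : List α) :
    editDist (a :: x) (b :: y) =
      min (1 + editDist x (b :: y))
        (min (1 + editDist (a :: x) y) (defaultCost.substitute a b + editDist x y)) :=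
  levenshtein_cons_cons _ a x b y

theorem editDist_cons_left_le (a : α) (x z : List α) :
    editDist (a :: x) z ≤ 1 + editDist x z := by
  cases z with
  | nil => simp [Nat.add_comm]
  | cons c z => rw [editDist_cons_cons]; omega

theorem editDist_cons_right_le (c : α) (x z : List α) :
    editDist x (c :: z) ≤ 1 + editDist x z := by
  cases x with
  | nil => simp [Nat.add_comm]
  | cons a x => rw [editDist_cons_cons]; omega

@[simp] theorem editDist_self (x : List α) : editDist x x = 0 := by
  induction x with
  | nil => rfl
  | cons a x ih => rw [editDist_cons_cons, defaultCost_substitute_self, ih]; omega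

theorem eq_of_editDist_eq_zero : ∀ {x y : List α}, editDist x y = 0 → x = y
  | [], [], _ => rfl
  | [], _ :: _, h | _ :: _, [], h => by simp at h
  | a :: x, b :: y, h => by
    rw [editDist_cons_cons] at h
    have hab : a = b := by
      by_contra hab
      rw [defaultCost_substitute_of_ne hab] at h
      omega
    rw [hab, eq_of_editDist_eq_zero (x := x) (y := y) (by omega)]

theorem editDist_comm (x : List α) : ∀ y : List α, editDist x y = editDist y x := by
  induction x with
  | nil => simp
  | cons a x ihx =>
    intro y
    induction y with
    | nil => simp
    | cons b y ihy =>
      rw [editDist_cons_cons, editDist_cons_cons, ihx, ihx, ihy, defaultCost_substitute_comm]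
      omega

theorem editDist_le_length_add_length (x : List α) :
    ∀ z : List α, editDist x z ≤ x.length + z.length := by
  induction x with
  | nil => simp
  | cons a x ih =>
    intro z
    have := editDist_cons_left_le a x z
    have := ih z
    simp only [List.length_cons]
    omega

theorem length_le_length_add_editDist (y : List α) :
    ∀ z : List α, z.length ≤ y.length + editDist y z := by
  induction y with
  | nil => simp
  | cons b y ih =>
    intro z
    induction z with
    | nil => simp
    | cons c z ihz =>
      have := ih (c :: z)
      have := ih z
      rw [editDist_cons_cons]
      simp only [List.length_cons] at *
      omega

theorem editDist_triangle (x : List α) :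
    ∀ y z : List α, editDist x z ≤ editDist x y + editDist y z := by
  induction x with
  | nil => simpa using length_le_length_add_editDist
  | cons a x ihx =>
    intro y
    induction y with
    | nil => simpa using editDist_le_length_add_length (a :: x)
    | cons b y ihy =>
      intro z
      induction z with
      | nil =>
        have := length_le_length_add_editDist (b :: y) (a :: x)
        rw [editDist_comm] at this
        simp only [editDist_nil_right, List.length_cons] at *
        omega
      | cons c z ihz =>
        have := ihx (b :: y) (c :: z)
        have := ihx y (c :: z)
        have := ihx y z
        have := ihy (c :: z)
        have := ihy z
        have := defaultCost_substitute_triangle a b c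
        have := editDist_cons_cons a b x y
        have := editDist_cons_cons b c y z
        have := editDist_cons_cons a c x z
        -- each pair of optimal first moves on `(a :: x, b :: y)` and `(b :: y, c :: z)` is
        -- matched by a first move on `(a :: x, c :: z)`
        omega

theorem editDist_pos_of_ne {x y : List α} (h : x ≠ y) : 0 < editDist x y :=
  Nat.pos_of_ne_zero fun h0 => h (eq_of_editDist_eq_zero h0)

theorem editDist_cons_self (a : α) (x : List α) : editDist (a :: x) x = 1 := by
  have := editDist_cons_left_le a x x
  have := editDist_pos_of_ne (List.cons_ne_self a x)
  simp only [editDist_self] at *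
  omega

theorem editDist_self_cons (a : α) (x : List α) : editDist x (a :: x) = 1 := by
  rw [editDist_comm, editDist_cons_self]

theorem editDist_cons_cons_of_ne {a b : α} (h : a ≠ b) (x : List α) :
    editDist (a :: x) (b :: x) = 1 := by
  have := editDist_pos_of_ne (x := a :: x) (y := b :: x) (by simp [h])
  have := editDist_cons_cons a b x x
  rw [defaultCost_substitute_of_ne h, editDist_self] at *
  omega

@[simp] theorem editDist_cons_cons_self (c : α) (x y : List α) :
    editDist (c :: x) (c :: y) = editDist x y := by
  have h₁ := editDist_triangle x (c :: y) y
  have h₂ := editDist_triangle x (c :: x) y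
  rw [editDist_cons_self] at h₁
  rw [editDist_self_cons] at h₂
  rw [editDist_cons_cons, defaultCost_substitute_self]
  omega

theorem exists_geodesic_step_of_length_le :
    ∀ (y x : List α), x ≠ y → y.length ≤ x.length →
      ∃ w, editDist x w = 1 ∧ editDist w y + 1 = editDist x y ∧
        x.length ≤ w.length + 1 ∧ w.length ≤ x.length
  | [], a :: x, _, _ => ⟨x, editDist_cons_self a x, by simp, by simp, by simp⟩
  | b :: y, a :: x, hne, hlen => by
    have hd := editDist_cons_cons a b x y
    have := defaultCost_substitute_le_one a b
    by_cases hdel : editDist (a :: x) (b :: y) = 1 + editDist x (b :: y)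
    · exact ⟨x, editDist_cons_self a x, by omega, by simp, by simp⟩
    by_cases hsub : editDist (a :: x) (b :: y) = defaultCost.substitute a b + editDist x y
    · by_cases hab : a = b
      · subst hab
        obtain ⟨w, hw₁, hw₂, hw₃, hw₄⟩ :=
          exists_geodesic_step_of_length_le y x (by simpa using hne) (by simpa using hlen)
        refine ⟨a :: w, ?_, ?_, ?_, ?_⟩ <;> simpa
      · refine ⟨b :: x, editDist_cons_cons_of_ne hab x, ?_, by simp, by simp⟩
        rw [editDist_cons_cons_self, hsub, defaultCost_substitute_of_ne hab]
        omega
    -- the optimal first move inserts `b`; postpone it and take the first move towards `y`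
    have hins : editDist (a :: x) (b :: y) = 1 + editDist (a :: x) y := by omega
    obtain ⟨w, hw₁, hw₂, hw₃, hw₄⟩ := exists_geodesic_step_of_length_le y (a :: x)
      (fun h => by simp [h] at hlen) (by simp at hlen ⊢; omega)
    have := editDist_cons_right_le b w y
    have := editDist_triangle (a :: x) w (b :: y)
    exact ⟨w, hw₁, by omega, hw₃, hw₄⟩

theorem exists_geodesic_step_of_le_length :
    ∀ (x y : List α), x ≠ y → x.length ≤ y.length →
      ∃ w, editDist x w = 1 ∧ editDist w y + 1 = editDist x y ∧
        x.length ≤ w.length ∧ w.length ≤ x.length + 1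
  | [], b :: y, _, _ => ⟨[b], by simp, by simp, by simp, by simp⟩
  | a :: x, b :: y, hne, hlen => by
    have hd := editDist_cons_cons a b x y
    have := defaultCost_substitute_le_one a b
    by_cases hins : editDist (a :: x) (b :: y) = 1 + editDist (a :: x) y
    · exact ⟨b :: a :: x, editDist_self_cons b (a :: x), by simp; omega, by simp, by simp⟩
    by_cases hsub : editDist (a :: x) (b :: y) = defaultCost.substitute a b + editDist x y
    · by_cases hab : a = b
      · subst hab
        obtain ⟨w, hw₁, hw₂, hw₃, hw₄⟩ :=
          exists_geodesic_step_of_le_length x y (by simpa using hne) (by simpa using hlen)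
        refine ⟨a :: w, ?_, ?_, ?_, ?_⟩ <;> simpa
      · refine ⟨b :: x, editDist_cons_cons_of_ne hab x, ?_, by simp, by simp⟩
        rw [editDist_cons_cons_self, hsub, defaultCost_substitute_of_ne hab]
        omega
    -- the optimal first move deletes `a`; postpone it and take the first move towards `b :: y`
    have hdel : editDist (a :: x) (b :: y) = 1 + editDist x (b :: y) := by omega
    obtain ⟨w, hw₁, hw₂, hw₃, hw₄⟩ := exists_geodesic_step_of_le_length x (b :: y)
      (fun h => by simp [h] at hlen) (by simp at hlen ⊢; omega)
    have := editDist_cons_left_le a w (b :: y)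
    have := editDist_triangle (a :: x) (a :: w) (b :: y)
    refine ⟨a :: w, by simpa using hw₁, ?_, by simpa using hw₃, by simpa using hw₄⟩
    simp only [editDist_cons_cons_self] at *
    omega

end EditDistance

section LevGraph

variable {a k₁ k₂ : ℕ}

theorem levGraph_adj_iff {u v : LevVertex a k₁ k₂} :
    (levGraph a k₁ k₂).Adj u v ↔ editDist u.1 v.1 = 1 := by
  rw [levGraph, SimpleGraph.fromRel_adj]
  refine ⟨fun ⟨_, h⟩ => h.elim id fun h => (editDist_comm _ _).trans h, fun h => ⟨?_, .inl h⟩⟩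
  rintro rfl
  simp at h

theorem editDist_le_walk_length {u v : LevVertex a k₁ k₂} (p : (levGraph a k₁ k₂).Walk u v) :
    editDist u.1 v.1 ≤ p.length := by
  induction p with
  | nil => simp
  | @cons u w v huw _ ih =>
    have := editDist_triangle u.1 w.1 v.1
    rw [levGraph_adj_iff.mp huw] at this
    rw [SimpleGraph.Walk.length_cons]
    omega

theorem exists_adj_editDist_succ (hk : k₁ < k₂) {u v : LevVertex a k₁ k₂} (huv : u ≠ v) :
    ∃ w, (levGraph a k₁ k₂).Adj u w ∧ editDist w.1 v.1 + 1 = editDist u.1 v.1 := by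
  obtain ⟨x, hx₁, hx₂⟩ := u
  obtain ⟨y, hy₁, hy₂⟩ := v
  have hxy : x ≠ y := fun h => huv (Subtype.ext h)
  suffices ∃ w, editDist x w = 1 ∧ editDist w y + 1 = editDist x y ∧ k₁ ≤ w.length ∧ w.length ≤ k₂
    from let ⟨w, hw₁, hw₂, hw₃, hw₄⟩ := this; ⟨⟨w, hw₃, hw₄⟩, levGraph_adj_iff.mpr hw₁, hw₂⟩
  -- if `u` cannot shrink, it is shorter than `v` or has length `k₁ < k₂`, so it may grow
  by_cases h : y.length ≤ x.length ∧ k₁ < x.length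
  · obtain ⟨w, hw₁, hw₂, hw₃, hw₄⟩ := exists_geodesic_step_of_length_le y x hxy h.1
    exact ⟨w, hw₁, hw₂, by omega, by omega⟩
  · obtain ⟨w, hw₁, hw₂, hw₃, hw₄⟩ := exists_geodesic_step_of_le_length x y hxy (by omega)
    exact ⟨w, hw₁, hw₂, by omega, by omega⟩

theorem exists_walk_length_eq_editDist (hk : k₁ < k₂) (u v : LevVertex a k₁ k₂) :
    ∃ p : (levGraph a k₁ k₂).Walk u v, p.length = editDist u.1 v.1 := by
  obtain ⟨n, hn⟩ : ∃ n, editDist u.1 v.1 = n := ⟨_, rfl⟩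
  induction n generalizing u with
  | zero =>
    obtain rfl : u = v := Subtype.ext (eq_of_editDist_eq_zero hn)
    exact ⟨.nil, by simp⟩
  | succ n ih =>
    have huv : u ≠ v := by rintro rfl; simp at hn
    obtain ⟨w, huw, hw⟩ := exists_adj_editDist_succ hk huv
    obtain ⟨p, hp⟩ := ih w (by omega)
    exact ⟨.cons huw p, by simp only [SimpleGraph.Walk.length_cons, hp, hw]⟩

end LevGraph

theorem levGraph_dist_eq_lev_general (a k₁ k₂ : ℕ) (hk : k₁ < k₂)
    (u v : LevVertex a k₁ k₂) :
    (levGraph a k₁ k₂).dist u v = levenshtein Levenshtein.defaultCost u.1 v.1 := by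
  change _ = editDist u.1 v.1
  obtain ⟨p, hp⟩ := exists_walk_length_eq_editDist hk u v
  obtain ⟨q, hq⟩ := p.reachable.exists_walk_length_eq_dist
  exact le_antisymm (hp ▸ SimpleGraph.dist_le p) (hq ▸ editDist_le_walk_length q)

/-- if `k₁ < k₂` (and `a ≥ 2`), the geodesic distance in `L_{k₁,k₂;a}`
equals the Levenshtein distance. -/
theorem levGraph_dist_eq_lev (a k₁ k₂ : ℕ) (ha : 2 ≤ a) (hk : k₁ < k₂)
    (u v : LevVertex a k₁ k₂) :
    (levGraph a k₁ k₂).dist u v = levenshtein Levenshtein.defaultCost u.1 v.1 :=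
  levGraph_dist_eq_lev_general a k₁ k₂ hk u v
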